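/- The max-Rains relative entropy R_max is monotone under PPT-preserving channels: if ρ ≤ 2^λ σ' for a positive operator σ' with ‖T_B(σ')‖₁ ≤ 1, and P is a completely positive trace-preserving map such that T_B ∘ P ∘ T_B is also completely positive, then P(ρ) ≤ 2^λ τ' for some positive operator τ' with ‖T_B(τ')‖₁ ≤ 1. -/

import Mathlib

open Matrix
open scoped ComplexOrder BigOperators Classical

noncomputable section

/-- Trace norm of a complex square matrix: `‖A‖₁ = Tr √(AᴴA)`. -/
def traceNorm {n : Type*} [Fintype n] [DecidableEq n] (A : Matrix n n ℂ) : ℝ :=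
  (((Matrix.posSemidef_conjTranspose_mul_self A).1.eigenvectorUnitary : Matrix n n ℂ) *
    Matrix.diagonal (((↑) : ℝ → ℂ) ∘ Real.sqrt ∘ (Matrix.posSemidef_conjTranspose_mul_self A).1.eigenvalues) *
    (star (Matrix.posSemidef_conjTranspose_mul_self A).1.eigenvectorUnitary : Matrix n n ℂ)).trace.re

/-- Partial transpose on the second tensor factor. -/
def ptB {α β : Type*} (A : Matrix (α × β) (α × β) ℂ) : Matrix (α × β) (α × β) ℂ :=
  fun x y => A (x.1, y.2) (y.1, x.2)

/-- The Choi matrix of a map between matrix spaces. -/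
def choiMatrix {ι κ : Type*} [Fintype ι] [DecidableEq ι] [Fintype κ]
    (F : Matrix ι ι ℂ → Matrix κ κ ℂ) : Matrix (ι × κ) (ι × κ) ℂ :=
  fun x y => F (Matrix.single x.1 y.1 1) x.2 y.2

/-- A map is completely positive iff its Choi matrix is positive semidefinite. -/
def IsCompletelyPositive {ι κ : Type*} [Fintype ι] [DecidableEq ι] [Fintype κ]
    (F : Matrix ι ι ℂ → Matrix κ κ ℂ) : Prop :=
  (choiMatrix F).PosSemidef

/-!
Take `τ' = P σ'`. A completely positive map has a Kraus form `X ↦ ∑ Kₘ X Kₘᴴ`, so it is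
positive, and linearity turns `ρ ≤ 2^λ σ'` into `P ρ ≤ 2^λ P σ'`. For the trace norm,
`T_B (P σ') = N (T_B σ')` with `N = T_B ∘ P ∘ T_B` positive and trace preserving, and such maps do
not increase the trace norm of a Hermitian `X`: splitting `X = X₊ - X₋` into positive and negative
parts, `‖N X‖₁ ≤ tr N X₊ + tr N X₋ = tr X₊ + tr X₋ = ‖X‖₁`.
-/

section Kraus

variable {ι κ : Type*} [Fintype ι] [DecidableEq ι] [Fintype κ]

theorem LinearMap.apply_matrix_eq_sum_single {R M : Type*} [CommSemiring R] [AddCommMonoid M]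
    [Module R M] (Φ : Matrix ι ι R →ₗ[R] M) (X : Matrix ι ι R) :
    Φ X = ∑ i, ∑ j, X i j • Φ (Matrix.single i j 1) := by
  conv_lhs => rw [matrix_eq_sum_single X]
  simp only [map_sum, ← map_smul, smul_single, smul_eq_mul, mul_one]

open scoped MatrixOrder in
theorem IsCompletelyPositive.exists_kraus {Φ : Matrix ι ι ℂ →ₗ[ℂ] Matrix κ κ ℂ}
    (hΦ : IsCompletelyPositive Φ) :
    ∃ K : ι × κ → Matrix κ ι ℂ, ∀ X, Φ X = ∑ m, K m * X * (K m)ᴴ := by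
  obtain ⟨V, hV⟩ := CStarAlgebra.nonneg_iff_eq_star_mul_self.mp hΦ.nonneg
  have hchoi (i j a b) : Φ (single i j 1) a b = ∑ m, star (V m (i, a)) * V m (j, b) := by
    simpa [choiMatrix, mul_apply] using congrFun (congrFun hV (i, a)) (j, b)
  refine ⟨fun m => of fun a i => star (V m (i, a)), fun X => ?_⟩
  ext a b
  rw [Φ.apply_matrix_eq_sum_single X]
  simp only [Matrix.sum_apply, Matrix.smul_apply, smul_eq_mul, hchoi, mul_apply,
    conjTranspose_apply, of_apply, star_star, Finset.mul_sum, Finset.sum_mul]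
  rw [Finset.sum_comm, Finset.sum_congr rfl fun _ _ => Finset.sum_comm, Finset.sum_comm]
  exact Finset.sum_congr rfl fun _ _ => Finset.sum_congr rfl fun _ _ =>
    Finset.sum_congr rfl fun _ _ => by ring

theorem IsCompletelyPositive.posSemidef_apply {Φ : Matrix ι ι ℂ →ₗ[ℂ] Matrix κ κ ℂ}
    (hΦ : IsCompletelyPositive Φ) {X : Matrix ι ι ℂ} (hX : X.PosSemidef) : (Φ X).PosSemidef := by
  obtain ⟨K, hK⟩ := hΦ.exists_kraus
  rw [hK]
  exact posSemidef_sum _ fun m _ => hX.mul_mul_conjTranspose_same (K m)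

end Kraus

theorem Matrix.IsHermitian.trace_cfc {𝕜 n : Type*} [RCLike 𝕜] [Fintype n] [DecidableEq n]
    {A : Matrix n n 𝕜} (hA : A.IsHermitian) (f : ℝ → ℝ) :
    (cfc f A).trace = ∑ i, (f (hA.eigenvalues i) : 𝕜) := by
  rw [hA.cfc_eq, IsHermitian.cfc, Unitary.conjStarAlgAut_apply, trace_mul_cycle,
    Unitary.coe_star_mul_self, one_mul, trace_diagonal]
  rfl

section TraceNorm

variable {n : Type*} [Fintype n] [DecidableEq n]

theorem traceNorm_eq_sum_abs_eigenvalues {X : Matrix n n ℂ} (hX : X.IsHermitian) :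
    traceNorm X = ∑ i, |hX.eigenvalues i| := by
  have hsqrt : cfc Real.sqrt (Xᴴ * X) = cfc (fun x : ℝ => |x|) X := by
    rw [hX.eq, ← pow_two, ← cfc_pow_id (R := ℝ) X 2 hX.isSelfAdjoint,
      ← cfc_comp Real.sqrt (fun x : ℝ => x ^ 2) X hX.isSelfAdjoint]
    exact cfc_congr fun x _ => Real.sqrt_sq_eq_abs x
  have h : traceNorm X = (cfc Real.sqrt (Xᴴ * X)).trace.re := by
    rw [(posSemidef_conjTranspose_mul_self X).1.cfc_eq]
    rfl
  rw [h, hsqrt, hX.trace_cfc, Complex.re_sum]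
  rfl

theorem traceNorm_sub_le {P Q : Matrix n n ℂ} (hP : P.PosSemidef) (hQ : Q.PosSemidef) :
    traceNorm (P - Q) ≤ P.trace.re + Q.trace.re := by
  have hX := hP.1.sub hQ.1
  set U : Matrix n n ℂ := ↑hX.eigenvectorUnitary
  have hdiag : diagonal (RCLike.ofReal ∘ hX.eigenvalues) = Uᴴ * P * U - Uᴴ * Q * U := by
    rw [← hX.conjStarAlgAut_star_eigenvectorUnitary, Unitary.conjStarAlgAut_star_apply,
      Matrix.mul_sub, Matrix.sub_mul, star_eq_conjTranspose]
  have hentry (i : n) :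
      |hX.eigenvalues i| ≤ ((Uᴴ * P * U) i i).re + ((Uᴴ * Q * U) i i).re := by
    have hi := congrArg (fun M => (M i i).re) hdiag
    simp only [diagonal_apply_eq, Function.comp_apply, Matrix.sub_apply, Complex.sub_re] at hi
    have hPi := (Complex.nonneg_iff.mp ((hP.conjTranspose_mul_mul_same U).diag_nonneg (i := i))).1
    have hQi := (Complex.nonneg_iff.mp ((hQ.conjTranspose_mul_mul_same U).diag_nonneg (i := i))).1
    replace hi : hX.eigenvalues i = ((Uᴴ * P * U) i i).re - ((Uᴴ * Q * U) i i).re := hi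
    rw [hi, abs_le]
    constructor <;> linarith
  have htrace (A : Matrix n n ℂ) : (Uᴴ * A * U).trace = A.trace := by
    rw [trace_mul_cycle, ← star_eq_conjTranspose,
      mem_unitaryGroup_iff.mp hX.eigenvectorUnitary.2, one_mul]
  calc traceNorm (P - Q) = ∑ i, |hX.eigenvalues i| := traceNorm_eq_sum_abs_eigenvalues hX
    _ ≤ ∑ i, (((Uᴴ * P * U) i i).re + ((Uᴴ * Q * U) i i).re) :=
      Finset.sum_le_sum fun i _ => hentry i
    _ = P.trace.re + Q.trace.re := by
      rw [Finset.sum_add_distrib, ← htrace P, ← htrace Q, trace, trace, Complex.re_sum,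
        Complex.re_sum]
      rfl

open scoped MatrixOrder in
theorem Matrix.IsHermitian.exists_posSemidef_sub_eq {X : Matrix n n ℂ} (hX : X.IsHermitian) :
    ∃ P Q : Matrix n n ℂ, P.PosSemidef ∧ Q.PosSemidef ∧ X = P - Q ∧
      P.trace.re + Q.trace.re = traceNorm X := by
  refine ⟨cfc (fun x : ℝ => max x 0) X, cfc (fun x : ℝ => max (-x) 0) X,
    nonneg_iff_posSemidef.mp (cfc_nonneg fun _ _ => le_max_right _ _),
    nonneg_iff_posSemidef.mp (cfc_nonneg fun _ _ => le_max_right _ _), ?_, ?_⟩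
  · rw [← cfc_sub _ _ X]
    conv_lhs => rw [← cfc_id' ℝ X]
    exact cfc_congr fun x _ => (max_zero_sub_max_neg_zero_eq_self x).symm
  · rw [hX.trace_cfc, hX.trace_cfc, traceNorm_eq_sum_abs_eigenvalues hX, Complex.re_sum,
      Complex.re_sum, ← Finset.sum_add_distrib]
    exact Finset.sum_congr rfl fun i _ => max_zero_add_max_neg_zero_eq_abs_self _

theorem traceNorm_apply_le {m : Type*} [Fintype m] [DecidableEq m]
    (Φ : Matrix n n ℂ →ₗ[ℂ] Matrix m m ℂ) (hpos : ∀ X, X.PosSemidef → (Φ X).PosSemidef)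
    (htr : ∀ X, (Φ X).trace = X.trace) {X : Matrix n n ℂ} (hX : X.IsHermitian) :
    traceNorm (Φ X) ≤ traceNorm X := by
  obtain ⟨P, Q, hP, hQ, rfl, hPQ⟩ := hX.exists_posSemidef_sub_eq
  calc traceNorm (Φ (P - Q)) = traceNorm (Φ P - Φ Q) := by rw [map_sub]
    _ ≤ (Φ P).trace.re + (Φ Q).trace.re := traceNorm_sub_le (hpos P hP) (hpos Q hQ)
    _ = traceNorm (P - Q) := by rw [htr, htr, hPQ]

end TraceNorm

section PartialTranspose

variable {α β : Type*}

def ptBLinearMap : Matrix (α × β) (α × β) ℂ →ₗ[ℂ] Matrix (α × β) (α × β) ℂ where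
  toFun := ptB
  map_add' _ _ := rfl
  map_smul' _ _ := rfl

theorem Matrix.IsHermitian.ptB {A : Matrix (α × β) (α × β) ℂ} (hA : A.IsHermitian) :
    (ptB A).IsHermitian :=
  funext₂ fun x y => congrFun₂ hA (x.1, y.2) (y.1, x.2)

end PartialTranspose

theorem rmax_monotone_ppt_general
    {α β α' β' : Type*} [Fintype α] [Fintype β] [DecidableEq α] [DecidableEq β]
    [Fintype α'] [Fintype β'] [DecidableEq α'] [DecidableEq β']
    (P : Matrix (α × β) (α × β) ℂ → Matrix (α' × β') (α' × β') ℂ)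
    (hadd : ∀ X Y, P (X + Y) = P X + P Y)
    (hsmul : ∀ (c : ℂ) X, P (c • X) = c • P X)
    (hCP : IsCompletelyPositive P)
    (hTP : ∀ X, (P X).trace = X.trace)
    (hPPT : IsCompletelyPositive (fun X => ptB (P (ptB X))))
    (ρ : Matrix (α × β) (α × β) ℂ)
    (σ' : Matrix (α × β) (α × β) ℂ) (hσ' : σ'.PosSemidef)
    (hσtn : traceNorm (ptB σ') ≤ 1)
    (l : ℝ) (hle : (((2 : ℝ) ^ l) • σ' - ρ).PosSemidef) :
    ∃ τ' : Matrix (α' × β') (α' × β') ℂ, τ'.PosSemidef ∧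
      traceNorm (ptB τ') ≤ 1 ∧ (((2 : ℝ) ^ l) • τ' - P ρ).PosSemidef := by
  let Φ : Matrix (α × β) (α × β) ℂ →ₗ[ℂ] Matrix (α' × β') (α' × β') ℂ := ⟨⟨P, hadd⟩, hsmul⟩
  let N := ptBLinearMap ∘ₗ Φ ∘ₗ ptBLinearMap
  refine ⟨P σ', IsCompletelyPositive.posSemidef_apply (Φ := Φ) hCP hσ', ?_, ?_⟩
  · calc traceNorm (ptB (P σ')) = traceNorm (N (ptB σ')) := rfl
      _ ≤ traceNorm (ptB σ') :=
        traceNorm_apply_le N (fun _ => IsCompletelyPositive.posSemidef_apply (Φ := N) hPPT)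
          (fun _ => hTP _) hσ'.1.ptB
      _ ≤ 1 := hσtn
  · have hdom : ((2 : ℝ) ^ l) • P σ' - P ρ = Φ (((2 : ℝ) ^ l) • σ' - ρ) := by
      rw [map_sub, LinearMap.map_smul_of_tower]
      rfl
    rw [hdom]
    exact IsCompletelyPositive.posSemidef_apply (Φ := Φ) hCP hle

/-- Monotonicity of the max-Rains relative entropy under PPT-preserving channels:
if `ρ ≤ 2^λ σ'` with `σ' ≥ 0` and `‖T_B(σ')‖₁ ≤ 1`, and `P` is a channel such
that `T_B ∘ P ∘ T_B` is completely positive, then `P(ρ) ≤ 2^λ τ'` for some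
`τ' ≥ 0` with `‖T_B(τ')‖₁ ≤ 1`. -/
theorem rmax_monotone_ppt
    {α β α' β' : Type*} [Fintype α] [Fintype β] [DecidableEq α] [DecidableEq β]
    [Fintype α'] [Fintype β'] [DecidableEq α'] [DecidableEq β']
    (P : Matrix (α × β) (α × β) ℂ → Matrix (α' × β') (α' × β') ℂ)
    (hadd : ∀ X Y, P (X + Y) = P X + P Y)
    (hsmul : ∀ (c : ℂ) X, P (c • X) = c • P X)
    (hCP : IsCompletelyPositive P)
    (hTP : ∀ X, (P X).trace = X.trace)
    (hPPT : IsCompletelyPositive (fun X => ptB (P (ptB X))))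
    (ρ : Matrix (α × β) (α × β) ℂ) (hρ : ρ.PosSemidef) (hρt : ρ.trace = 1)
    (σ' : Matrix (α × β) (α × β) ℂ) (hσ' : σ'.PosSemidef)
    (hσtn : traceNorm (ptB σ') ≤ 1)
    (l : ℝ) (hle : (((2 : ℝ) ^ l) • σ' - ρ).PosSemidef) :
    ∃ τ' : Matrix (α' × β') (α' × β') ℂ, τ'.PosSemidef ∧
      traceNorm (ptB τ') ≤ 1 ∧ (((2 : ℝ) ^ l) • τ' - P ρ).PosSemidef :=
  rmax_monotone_ppt_general P hadd hsmul hCP hTP hPPT ρ σ' hσ' hσtn l hle
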